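/- Let X₀ and X₁ be independent random variables, each uniformly distributed on [−2, 2], and set Ω₀ = arccos(X₀/2), Ω₁ = arccos(X₁/2). Then for every real x with x > 1, P(Ω₀/Ω₁ ≤ x) = (3 + cos(π/x))/4 + (1 + cos(π/x)) / (4·(x² − 1)). -/

import Mathlib

/-!
With `Θᵢ = arccos (Xᵢ / 2) ∈ [0, π]` and `Xᵢ / 2` uniform on `[-1, 1]`, `P(Θᵢ ≤ t) = (1 - cos t) / 2`
for `t ∈ [0, π]`. By Fubini for the product law, `P(Θ₀ ≤ x Θ₁) = E[(1 - cos (min (x Θ₁) π)) / 2]`,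
and the substitution `X₁ = 2 cos u` turns this into `¼ ∫₀^π sin u (1 - cos (min (x u) π)) du`.
Splitting at `u = π / x` leaves an elementary integral plus `2 (1 + cos (π / x))`.
-/

open Real Set MeasureTheory ProbabilityTheory intervalIntegral

local notation "𝒰" => ((4 : ENNReal)⁻¹ • volume.restrict (Icc (-2 : ℝ) 2) : Measure ℝ)

theorem Real.arccos_le_iff_cos_le {a t : ℝ} (ha : a ∈ Icc (-1) 1) (ht : t ∈ Icc 0 π) :
    arccos a ≤ t ↔ cos t ≤ a := by
  conv_lhs => rw [← arccos_cos ht.1 ht.2]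
  exact strictAntiOn_arccos.le_iff_ge ha ⟨neg_one_le_cos t, cos_le_one t⟩

theorem measure_arccos_half_le_of_mem_Icc {t : ℝ} (ht : t ∈ Icc 0 π) :
    𝒰 {a | arccos (a / 2) ≤ t} = ENNReal.ofReal ((1 - cos t) / 2) := by
  have hset : {a : ℝ | arccos (a / 2) ≤ t} ∩ Icc (-2) 2 = Icc (2 * cos t) 2 := by
    ext a
    have hcos := neg_one_le_cos t
    simp only [mem_inter_iff, mem_ofPred_eq, mem_Icc]
    constructor
    · rintro ⟨h, ha₁, ha₂⟩
      have := (arccos_le_iff_cos_le ⟨by linarith, by linarith⟩ ht).1 h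
      constructor <;> linarith
    · rintro ⟨ha₁, ha₂⟩
      refine ⟨(arccos_le_iff_cos_le ⟨by linarith, by linarith⟩ ht).2 (by linarith), ?_, ha₂⟩
      linarith
  rw [Measure.smul_apply, Measure.restrict_apply (measurableSet_le (by fun_prop) measurable_const),
    hset, Real.volume_Icc, smul_eq_mul, ← ENNReal.ofReal_ofNat 4,
    ← ENNReal.ofReal_inv_of_pos (by norm_num), ← ENNReal.ofReal_mul (by norm_num)]
  ring_nf

theorem measure_arccos_half_le {t : ℝ} (ht : 0 ≤ t) :
    𝒰 {a | arccos (a / 2) ≤ t} = ENNReal.ofReal ((1 - cos (min t π)) / 2) := by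
  have : {a : ℝ | arccos (a / 2) ≤ t} = {a | arccos (a / 2) ≤ min t π} := by
    ext; simp [arccos_le_pi]
  rw [this, measure_arccos_half_le_of_mem_Icc ⟨le_min ht pi_pos.le, min_le_right _ _⟩]

theorem measure_arccos_half_div_le {x b : ℝ} (hx : 0 ≤ x) (hb : b < 2) :
    𝒰 {a | arccos (a / 2) / arccos (b / 2) ≤ x}
      = ENNReal.ofReal ((1 - cos (min (x * arccos (b / 2)) π)) / 2) := by
  simp_rw [div_le_iff₀ (arccos_pos.2 (by linarith : b / 2 < 1))]
  exact measure_arccos_half_le (mul_nonneg hx (arccos_nonneg _))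

theorem integral_comp_arccos_half {h : ℝ → ℝ} (hh : Continuous h) :
    ∫ b in (-2)..2, h (arccos (b / 2)) = ∫ u in 0..π, 2 * sin u * h u := by
  have hsubst := integral_comp_mul_deriv (a := π) (b := 0) (f := fun u ↦ 2 * cos u)
    (f' := fun u ↦ -2 * sin u) (g := fun b ↦ h (arccos (b / 2)))
    (fun u _ ↦ by simpa using (hasDerivAt_cos u).const_mul 2) (by fun_prop) (by fun_prop)
  simp only [cos_pi, cos_zero, Function.comp_def] at hsubst
  norm_num at hsubst
  rw [← hsubst, integral_symm, neg_neg]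
  refine integral_congr fun u hu ↦ ?_
  rw [uIcc_of_le pi_pos.le] at hu
  rw [arccos_cos hu.1 hu.2, mul_comm]

theorem integral_sin_mul_one_sub_cos_mul {x : ℝ} (hx : 1 < x) :
    ∫ u in 0..π / x, sin u * (1 - cos (x * u))
      = 1 - cos (π / x) + (1 + cos (π / x)) / (x ^ 2 - 1) := by
  have hxp : x + 1 ≠ 0 := by linarith
  have hxm : x - 1 ≠ 0 := by linarith
  have hx₀ : x ≠ 0 := by linarith
  -- from `2 sin u cos (x u) = sin ((x + 1) u) - sin ((x - 1) u)`
  let F : ℝ → ℝ := fun u ↦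
    -cos u + cos ((x + 1) * u) / (2 * (x + 1)) - cos ((x - 1) * u) / (2 * (x - 1))
  have hF : ∀ u, HasDerivAt F (sin u * (1 - cos (x * u))) u := by
    intro u
    have hcos : ∀ k : ℝ, HasDerivAt (fun u ↦ cos (k * u)) (-sin (k * u) * k) u := fun k ↦
      by simpa using ((hasDerivAt_id u).const_mul k).cos
    refine (((hasDerivAt_cos u).neg.add ((hcos (x + 1)).div_const _)).sub
      ((hcos (x - 1)).div_const _)).congr_deriv ?_
    rw [add_mul, sub_mul, one_mul, sin_add, sin_sub]
    field_simp
    ring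
  rw [integral_eq_sub_of_hasDerivAt (fun u _ ↦ hF u)
    (Continuous.intervalIntegrable (by fun_prop) _ _)]
  have hp : (x + 1) * (π / x) = π / x + π := by field_simp; ring
  have hm : (x - 1) * (π / x) = π - π / x := by field_simp
  simp only [F, hp, hm, cos_add_pi, cos_pi_sub, mul_zero, cos_zero]
  have : x ^ 2 - 1 = (x + 1) * (x - 1) := by ring
  rw [this]
  field_simp
  ring

theorem integral_sin_mul_one_sub_cos_min {x : ℝ} (hx : 1 < x) :
    ∫ u in 0..π, sin u * (1 - cos (min (x * u) π))
      = 3 + cos (π / x) + (1 + cos (π / x)) / (x ^ 2 - 1) := by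
  have hx₀ : 0 < x := by linarith
  have hπx : π / x ≤ π := div_le_self pi_pos.le hx.le
  have hint : ∀ a b,
      IntervalIntegrable (fun u ↦ sin u * (1 - cos (min (x * u) π))) volume a b :=
    fun _ _ ↦ Continuous.intervalIntegrable (by fun_prop) _ _
  rw [← integral_add_adjacent_intervals (hint 0 (π / x)) (hint (π / x) π)]
  have hlow : ∫ u in 0..π / x, sin u * (1 - cos (min (x * u) π))
      = ∫ u in 0..π / x, sin u * (1 - cos (x * u)) := by
    refine integral_congr fun u hu ↦ ?_
    rw [uIcc_of_le (by positivity)] at hu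
    have : x * u ≤ π := (le_div_iff₀' hx₀).1 hu.2
    simp only [min_eq_left this]
  have hhigh : ∫ u in π / x..π, sin u * (1 - cos (min (x * u) π))
      = ∫ u in π / x..π, 2 * sin u := by
    refine integral_congr fun u hu ↦ ?_
    rw [uIcc_of_le hπx] at hu
    have : π ≤ x * u := (div_le_iff₀' hx₀).1 hu.1
    simp only [min_eq_right this, cos_pi]
    ring
  rw [hlow, hhigh, integral_sin_mul_one_sub_cos_mul hx, intervalIntegral.integral_const_mul,
    integral_sin, cos_pi]
  ring

theorem prod_measure_arccos_half_div_le {x : ℝ} (hx : 0 ≤ x) :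
    (Measure.prod 𝒰 𝒰) {p : ℝ × ℝ | arccos (p.1 / 2) / arccos (p.2 / 2) ≤ x}
      = (4 : ENNReal)⁻¹ *
          ENNReal.ofReal (∫ b in (-2)..2, (1 - cos (min (x * arccos (b / 2)) π)) / 2) := by
  set S := {p : ℝ × ℝ | arccos (p.1 / 2) / arccos (p.2 / 2) ≤ x}
  -- `b = 2` is left out (a null set): there `arccos (b / 2) = 0` and the ratio is the junk `0`.
  have hslice : ∀ b ∈ Ico (-2 : ℝ) 2, 𝒰 ((fun a ↦ (a, b)) ⁻¹' S)
      = ENNReal.ofReal ((1 - cos (min (x * arccos (b / 2)) π)) / 2) :=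
    fun b hb ↦ measure_arccos_half_div_le hx hb.2
  have hcont : Continuous fun b : ℝ ↦ (1 - cos (min (x * arccos (b / 2)) π)) / 2 := by fun_prop
  rw [Measure.prod_apply_symm (measurableSet_le (by fun_prop) measurable_const),
    lintegral_smul_measure, smul_eq_mul, setLIntegral_congr Ico_ae_eq_Icc.symm,
    setLIntegral_congr_fun measurableSet_Ico hslice,
    ← ofReal_integral_eq_lintegral_ofReal (hcont.integrableOn_Icc.mono_set Ico_subset_Icc_self)
      (ae_of_all _ fun b ↦ div_nonneg (sub_nonneg.2 (cos_le_one _)) zero_le_two),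
    setIntegral_congr_set Ico_ae_eq_Icc, integral_Icc_eq_integral_Ioc,
    ← integral_of_le (by norm_num)]

/-- CDF of the ratio `Ω₀ / Ω₁` of arccosines of independent uniforms on `[-2,2]`,
for arguments greater than 1. -/
theorem cdf_ratio_gt_one
    {Ω : Type*} [MeasureSpace Ω] [IsProbabilityMeasure (ℙ : Measure Ω)]
    (X₀ X₁ : Ω → ℝ) (hX₀ : Measurable X₀) (hX₁ : Measurable X₁)
    (hindep : IndepFun X₀ X₁ ℙ)
    (hU₀ : Measure.map X₀ ℙ = (4 : ENNReal)⁻¹ • volume.restrict (Set.Icc (-2 : ℝ) 2))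
    (hU₁ : Measure.map X₁ ℙ = (4 : ENNReal)⁻¹ • volume.restrict (Set.Icc (-2 : ℝ) 2))
    (x : ℝ) (hx : 1 < x) :
    ℙ {ω | Real.arccos (X₀ ω / 2) / Real.arccos (X₁ ω / 2) ≤ x}
      = ENNReal.ofReal ((3 + Real.cos (Real.pi / x)) / 4 + (1 + Real.cos (Real.pi / x)) / (4 * (x ^ 2 - 1))) := by
  have hS : MeasurableSet {p : ℝ × ℝ | arccos (p.1 / 2) / arccos (p.2 / 2) ≤ x} :=
    measurableSet_le (by fun_prop) measurable_const
  have hprob : ℙ {ω | arccos (X₀ ω / 2) / arccos (X₁ ω / 2) ≤ x}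
      = ((Measure.map X₀ ℙ).prod (Measure.map X₁ ℙ))
          {p : ℝ × ℝ | arccos (p.1 / 2) / arccos (p.2 / 2) ≤ x} := by
    rw [← hindep.map_prod_eq_prod_map_map hX₀.aemeasurable hX₁.aemeasurable,
      Measure.map_apply (hX₀.prodMk hX₁) hS]
    rfl
  have hintegral : ∫ b in (-2)..2, (1 - cos (min (x * arccos (b / 2)) π)) / 2
      = 3 + cos (π / x) + (1 + cos (π / x)) / (x ^ 2 - 1) := by
    rw [integral_comp_arccos_half (h := fun t ↦ (1 - cos (min (x * t) π)) / 2) (by fun_prop),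
      ← integral_sin_mul_one_sub_cos_min hx]
    congr 1 with u
    ring
  rw [hprob, hU₀, hU₁, prod_measure_arccos_half_div_le (by linarith), hintegral,
    ← ENNReal.ofReal_ofNat 4, ← ENNReal.ofReal_inv_of_pos (by norm_num),
    ← ENNReal.ofReal_mul (by norm_num)]
  congr 1
  have : x ^ 2 - 1 ≠ 0 := by nlinarith
  field_simp
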